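/- arXiv:1804.02144 — 2 statements merged into one kernel-verified Lean document; each statement's English description precedes it below -/
import Mathlib

section
/- (Theorem 2) Let n ≥ 1, let (x_i, y_i) ∈ ℝ² and E_i ≥ 0 for i = 1, …, n, let d_max > 0, and let z > 0 satisfy z > √3 · d_max. Let D ⊆ ℝ² be a convex set such that for every (X, Y) ∈ D and every i, sqrt((X − x_i)² + (Y − y_i)²) < d_max. Then the function F(X, Y) = Σ_{i=1}^n E_i / ((X − x_i)² + (Y − y_i)² + z²) is concave on D. -/
/-!
Each summand is a nonnegative multiple of `p ↦ (‖p - q‖² + z²)⁻¹`, which is concave on the ball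
`‖p - q‖ < z / √3` of any real inner product space. Along a chord from `a` to `b`, with
`A, B` the values of `‖· - q‖² + z²` at the endpoints and `c = ‖a - b‖²`, the value at
`s • a + t • b` is `s A + t B - s t c`, and the concavity inequality reduces to
`(A - B)² ≤ c (s B + t A)`. Since `A - B = ⟪a - b, (a - q) + (b - q)⟫`, this follows from
Cauchy–Schwarz once `‖(a - q) + (b - q)‖² ≤ z² + s ‖b - q‖² + t ‖a - q‖²`, and that bound is
where `3 ‖· - q‖² < z²` enters.
-/

open Real

theorem ConcaveOn.sum {𝕜 E β ι : Type*} [Semiring 𝕜] [PartialOrder 𝕜] [AddCommMonoid E]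
    [SMul 𝕜 E] [AddCommMonoid β] [PartialOrder β] [IsOrderedAddMonoid β] [Module 𝕜 β]
    {s : Set E} {t : Finset ι} {f : ι → E → β} (hs : Convex 𝕜 s)
    (h : ∀ i ∈ t, ConcaveOn 𝕜 s (f i)) : ConcaveOn 𝕜 s (fun x => ∑ i ∈ t, f i x) := by
  classical
  induction t using Finset.induction_on with
  | empty => simpa using concaveOn_const (0 : β) hs
  | insert a t ha ih =>
    simp only [Finset.sum_insert ha]
    exact (h a (t.mem_insert_self a)).add (ih fun i hi => h i (Finset.mem_insert_of_mem hi))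

theorem inv_add_inv_le_inv_sub {A B c s t : ℝ} (hA : 0 < A) (hB : 0 < B)
    (hs : 0 ≤ s) (ht : 0 ≤ t) (hst : s + t = 1) (hpos : 0 < s * A + t * B - s * t * c)
    (h : (A - B) ^ 2 ≤ c * (s * B + t * A)) :
    s * A⁻¹ + t * B⁻¹ ≤ (s * A + t * B - s * t * c)⁻¹ := by
  rw [← div_eq_mul_inv, ← div_eq_mul_inv, div_add_div _ _ hA.ne' hB.ne', inv_eq_one_div,
    div_le_div_iff₀ (by positivity) hpos]
  obtain rfl : t = 1 - s := by linarith
  -- `A B - (s B + t A) (s A + t B - s t c) = s t (c (s B + t A) - (A - B)²)` when `s + t = 1`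
  nlinarith [mul_nonneg (mul_nonneg hs ht) (sub_nonneg.2 h)]

theorem add_sq_le_of_three_mul_sq_le {α β z s t : ℝ} (hα : 0 ≤ α) (hβ : 0 ≤ β)
    (hαz : 3 * α ^ 2 ≤ z ^ 2) (hβz : 3 * β ^ 2 ≤ z ^ 2) (hs : 0 ≤ s) (ht : 0 ≤ t)
    (hst : s + t = 1) : (α + β) ^ 2 ≤ z ^ 2 + s * β ^ 2 + t * α ^ 2 := by
  obtain rfl : t = 1 - s := by linarith
  rcases le_total α β with h | h
  · nlinarith [mul_nonneg hs (mul_nonneg (sub_nonneg.2 h) (add_nonneg hα hβ))]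
  · nlinarith [mul_nonneg ht (mul_nonneg (sub_nonneg.2 h) (add_nonneg hα hβ))]

theorem three_mul_sq_lt_of_lt_div_sqrt_three {r z : ℝ} (hr : 0 ≤ r) (h : r < z / √3) :
    3 * r ^ 2 < z ^ 2 := by
  have h' : r * √3 < z := (lt_div_iff₀ (by positivity)).1 h
  calc 3 * r ^ 2 = (r * √3) ^ 2 := by rw [mul_pow, sq_sqrt (by norm_num : (0 : ℝ) ≤ 3), mul_comm]
    _ < z ^ 2 := by gcongr

section InnerProductSpace

variable {E : Type*} [NormedAddCommGroup E] [InnerProductSpace ℝ E]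

theorem norm_smul_add_smul_sub_sq (a b q : E) {s t : ℝ} (hst : s + t = 1) :
    ‖s • a + t • b - q‖ ^ 2 = s * ‖a - q‖ ^ 2 + t * ‖b - q‖ ^ 2 - s * t * ‖a - b‖ ^ 2 := by
  have hq : s • a + t • b - q = s • (a - q) + t • (b - q) := by
    rw [smul_sub, smul_sub]
    nth_rw 1 [← one_smul ℝ q]
    rw [← hst, add_smul]
    abel
  have hab : a - b = (a - q) - (b - q) := by abel
  rw [hq, hab]
  set u := a - q
  set v := b - q
  rw [norm_add_sq_real, norm_sub_sq_real u v, norm_smul, norm_smul, real_inner_smul_left,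
    real_inner_smul_right, mul_pow, mul_pow, Real.norm_eq_abs, Real.norm_eq_abs, sq_abs, sq_abs]
  obtain rfl : t = 1 - s := by linarith
  ring

theorem sq_norm_sub_sq_norm_sq_le (u v : E) :
    (‖u‖ ^ 2 - ‖v‖ ^ 2) ^ 2 ≤ ‖u - v‖ ^ 2 * ‖u + v‖ ^ 2 := by
  have h : ‖u‖ ^ 2 - ‖v‖ ^ 2 = inner ℝ (u - v) (u + v) := by
    simp only [inner_sub_left, inner_add_right, real_inner_self_eq_norm_sq, real_inner_comm u v]
    ring
  rw [h, ← mul_pow]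
  exact sq_le_sq' (neg_le_of_abs_le (abs_real_inner_le_norm _ _)) (real_inner_le_norm _ _)

theorem concaveOn_inv_norm_sub_sq_add_sq (q : E) (z : ℝ) :
    ConcaveOn ℝ (Metric.ball q (z / √3)) (fun p => (‖p - q‖ ^ 2 + z ^ 2)⁻¹) := by
  refine ⟨convex_ball q _, fun a ha b hb s t hs ht hst => ?_⟩
  rw [Metric.mem_ball, dist_eq_norm] at ha hb
  have haz := three_mul_sq_lt_of_lt_div_sqrt_three (norm_nonneg _) ha
  have hbz := three_mul_sq_lt_of_lt_div_sqrt_three (norm_nonneg _) hb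
  have hz : 0 < z ^ 2 := by nlinarith [norm_nonneg (a - q)]
  have hcs : (‖a - q‖ ^ 2 + z ^ 2 - (‖b - q‖ ^ 2 + z ^ 2)) ^ 2 ≤
      ‖a - b‖ ^ 2 * (s * (‖b - q‖ ^ 2 + z ^ 2) + t * (‖a - q‖ ^ 2 + z ^ 2)) := by
    have hsum : ‖a - q + (b - q)‖ ^ 2 ≤ s * (‖b - q‖ ^ 2 + z ^ 2) + t * (‖a - q‖ ^ 2 + z ^ 2) :=
      calc ‖a - q + (b - q)‖ ^ 2 ≤ (‖a - q‖ + ‖b - q‖) ^ 2 := by gcongr; exact norm_add_le _ _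
        _ ≤ z ^ 2 + s * ‖b - q‖ ^ 2 + t * ‖a - q‖ ^ 2 :=
          add_sq_le_of_three_mul_sq_le (norm_nonneg _) (norm_nonneg _) haz.le hbz.le hs ht hst
        _ = _ := by linear_combination (-z ^ 2) * hst
    calc _ = (‖a - q‖ ^ 2 - ‖b - q‖ ^ 2) ^ 2 := by ring
      _ ≤ ‖a - q - (b - q)‖ ^ 2 * ‖a - q + (b - q)‖ ^ 2 := sq_norm_sub_sq_norm_sq_le _ _
      _ ≤ _ := by rw [sub_sub_sub_cancel_right]; gcongr
  have hden : s * (‖a - q‖ ^ 2 + z ^ 2) + t * (‖b - q‖ ^ 2 + z ^ 2) - s * t * ‖a - b‖ ^ 2 =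
      ‖s • a + t • b - q‖ ^ 2 + z ^ 2 := by
    rw [norm_smul_add_smul_sub_sq a b q hst]
    linear_combination z ^ 2 * hst
  have key := inv_add_inv_le_inv_sub (by positivity) (by positivity) hs ht hst
    (hden ▸ by positivity) hcs
  rwa [hden] at key

end InnerProductSpace

theorem stmt_6_general (n : ℕ) (x y E : Fin n → ℝ) (hE : ∀ i, 0 ≤ E i)
    (dmax : ℝ) (z : ℝ) (hz' : Real.sqrt 3 * dmax < z)
    (D : Set (ℝ × ℝ)) (hD : Convex ℝ D)
    (hdist : ∀ p ∈ D, ∀ i : Fin n,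
      Real.sqrt ((p.1 - x i) ^ 2 + (p.2 - y i) ^ 2) < dmax) :
    ConcaveOn ℝ D (fun p : ℝ × ℝ =>
      ∑ i : Fin n, E i / ((p.1 - x i) ^ 2 + (p.2 - y i) ^ 2 + z ^ 2)) := by
  -- `ℝ × ℝ` carries the sup norm; the Euclidean plane is `WithLp 2 (ℝ × ℝ)`.
  let e : ℝ × ℝ →ₗ[ℝ] WithLp 2 (ℝ × ℝ) := (WithLp.linearEquiv 2 ℝ (ℝ × ℝ)).symm.toLinearMap
  have he : ∀ p q : ℝ × ℝ, ‖e p - e q‖ ^ 2 = (p.1 - q.1) ^ 2 + (p.2 - q.2) ^ 2 := by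
    intro p q
    simp [e, WithLp.prod_norm_sq_eq_of_L2]
  refine ConcaveOn.sum hD fun i _ => ?_
  have hball : D ⊆ e ⁻¹' Metric.ball (e (x i, y i)) (z / √3) := fun p hp => by
    rw [Set.mem_preimage, Metric.mem_ball, dist_eq_norm, ← sqrt_sq (norm_nonneg _), he]
    exact (hdist p hp i).trans ((lt_div_iff₀ (by positivity)).2 (by linarith))
  refine (((concaveOn_inv_norm_sub_sq_add_sq _ z).comp_linearMap e).subset hball hD).smul (hE i)
    |>.congr fun p _ => ?_
  simp only [Function.comp_apply, he, smul_eq_mul, div_eq_mul_inv]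

/-- Theorem 2: if the UAV altitude satisfies `z > √3 · d_max`, where `d_max` bounds the
horizontal distance from any point of the convex region `D` to every user, then the
lifetime objective `F(X, Y) = Σᵢ Eᵢ / ((X − xᵢ)² + (Y − yᵢ)² + z²)` is concave on `D`. -/
theorem stmt_6 (n : ℕ) (hn : 1 ≤ n) (x y E : Fin n → ℝ) (hE : ∀ i, 0 ≤ E i)
    (dmax : ℝ) (hdmax : 0 < dmax) (z : ℝ) (hz : 0 < z) (hz' : Real.sqrt 3 * dmax < z)
    (D : Set (ℝ × ℝ)) (hD : Convex ℝ D)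
    (hdist : ∀ p ∈ D, ∀ i : Fin n,
      Real.sqrt ((p.1 - x i) ^ 2 + (p.2 - y i) ^ 2) < dmax) :
    ConcaveOn ℝ D (fun p : ℝ × ℝ =>
      ∑ i : Fin n, E i / ((p.1 - x i) ^ 2 + (p.2 - y i) ^ 2 + z ^ 2)) :=
  stmt_6_general n x y E hE dmax z hz' D hD hdist
end

section
/- Let z > 0 and (x, y) ∈ ℝ², and let D ⊆ ℝ² be a convex set such that 3·((X − x)² + (Y − y)²) ≤ z² for all (X, Y) ∈ D. Then the function f(X, Y) = 1 / ((X − x)² + (Y − y)² + z²) is concave on D. -/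
theorem keylem (P Q w Z a b : ℝ) (hP : 0 ≤ P) (hQ : 0 ≤ Q)
    (h3P : 3*P ≤ Z) (h3Q : 3*Q ≤ Z) (hw : w^2 ≤ P*Q)
    (ha : 0 ≤ a) (hb : 0 ≤ b) (hab : a + b = 1) :
    (a*(Q+Z)+b*(P+Z)) * (a^2*P+2*a*b*w+b^2*Q+Z) ≤ (P+Z)*(Q+Z) := by
  obtain rfl : b = 1 - a := by linarith
  have h1 : 2*w ≤ P + Q := by nlinarith [sq_nonneg (P - Q), sq_nonneg (P + Q - 2*w)]
  have h2 : P + Q + 2*w ≤ Z + (a*Q + (1-a)*P) := by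
    rcases le_total P Q with h | h
    · nlinarith [sq_nonneg w, mul_nonneg ha (sub_nonneg.2 h)]
    · nlinarith [sq_nonneg w, mul_nonneg hb (sub_nonneg.2 h)]
  have h3 : (P - Q)^2 ≤ (P + Q - 2*w) * (a*Q + (1-a)*P + Z) := by
    nlinarith [mul_nonneg (by linarith : (0:ℝ) ≤ P + Q - 2*w) (by linarith : (0:ℝ) ≤ Z + (a*Q + (1-a)*P) - (P + Q + 2*w))]
  nlinarith [mul_nonneg (mul_nonneg ha hb) (sub_nonneg.2 h3)]

/-- Single-user concavity: on a convex set `D` where `3·((X − x)² + (Y − y)²) ≤ z²`,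
the function `f(X, Y) = 1 / ((X − x)² + (Y − y)² + z²)` is concave. -/
theorem stmt_7 (z x y : ℝ) (hz : 0 < z) (D : Set (ℝ × ℝ)) (hD : Convex ℝ D)
    (hbound : ∀ p ∈ D, 3 * ((p.1 - x) ^ 2 + (p.2 - y) ^ 2) ≤ z ^ 2) :
    ConcaveOn ℝ D (fun p : ℝ × ℝ =>
      1 / ((p.1 - x) ^ 2 + (p.2 - y) ^ 2 + z ^ 2)) := by
  refine ⟨hD, fun p hp q hq a b ha hb hab => ?_⟩
  obtain rfl : b = 1 - a := by linarith
  set P : ℝ := (p.1 - x)^2 + (p.2 - y)^2 with hPdef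
  set Q : ℝ := (q.1 - x)^2 + (q.2 - y)^2 with hQdef
  set w : ℝ := (p.1 - x)*(q.1 - x) + (p.2 - y)*(q.2 - y) with hwdef
  have hP : 0 ≤ P := by positivity
  have hQ : 0 ≤ Q := by positivity
  have hZ : (0:ℝ) < z^2 := by positivity
  have hw : w^2 ≤ P*Q := by
    rw [hwdef, hPdef, hQdef]; nlinarith [sq_nonneg ((p.1-x)*(q.2-y) - (p.2-y)*(q.1-x))]
  have key := keylem P Q w (z^2) a (1-a) hP hQ (hbound p hp) (hbound q hq) hw ha hb hab
  have hA : ((a • p + (1-a) • q).1 - x)^2 + ((a • p + (1-a) • q).2 - y)^2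
      = a^2*P + 2*a*(1-a)*w + (1-a)^2*Q := by
    simp only [Prod.smul_fst, Prod.smul_snd, Prod.fst_add, Prod.snd_add, smul_eq_mul,
      hPdef, hQdef, hwdef]
    ring
  simp only [smul_eq_mul]
  rw [hA]
  have hDP : (0:ℝ) < P + z^2 := by positivity
  have hDQ : (0:ℝ) < Q + z^2 := by positivity
  have hDA : (0:ℝ) < a^2*P + 2*a*(1-a)*w + (1-a)^2*Q + z^2 := by
    nlinarith [sq_nonneg (a*(p.1-x)+(1-a)*(q.1-x)), sq_nonneg (a*(p.2-y)+(1-a)*(q.2-y))]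
  simp only [mul_one_div]
  have hsum : a/(P+z^2)+(1-a)/(Q+z^2) = (a*(Q+z^2)+(1-a)*(P+z^2))/((P+z^2)*(Q+z^2)) := by
    field_simp
  rw [show ((p.1 - x) ^ 2 + (p.2 - y) ^ 2 : ℝ) = P from rfl,
    show ((q.1 - x) ^ 2 + (q.2 - y) ^ 2 : ℝ) = Q from rfl, hsum, div_le_div_iff₀ (mul_pos hDP hDQ) hDA, one_mul]
  refine le_trans (le_of_eq ?_) key
  ring
end
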